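/- Under the strictly convex quadratic assumption, the set Ĝ = {(x, α) ∈ ℝ^n × Δ^m : (∑_j α_j Q_j) x = ∑_j α_j Q_j x_j^f} is compact. -/

import Mathlib

/-! A convex combination of positive definite matrices is positive definite, hence invertible,
so over the simplex the linear system has the unique solution `(∑ α_j Q_j)⁻¹ ∑ α_j Q_j x_j^f`,
which depends continuously on `α`. The set is therefore the image of the compact simplex under a
continuous map. -/

open Matrix Finset

namespace Matrix

variable {ι n : Type*}

theorem PosDef.sum_smul {s : Finset ι} {w : ι → ℝ} {A : ι → Matrix n n ℝ}
    (hA : ∀ i ∈ s, (A i).PosDef) (hw : ∀ i ∈ s, 0 ≤ w i) (hpos : ∃ i ∈ s, 0 < w i) :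
    (∑ i ∈ s, w i • A i).PosDef := by
  classical
  obtain ⟨i, hi, hwi⟩ := hpos
  rw [← Finset.add_sum_erase s _ hi]
  exact ((hA i hi).smul hwi).add_posSemidef <| posSemidef_sum _ fun j hj =>
    (hA j (mem_of_mem_erase hj)).posSemidef.smul (hw j (mem_of_mem_erase hj))

theorem PosDef.sum_smul_of_mem_stdSimplex [Fintype ι] {w : ι → ℝ} {A : ι → Matrix n n ℝ}
    (hA : ∀ i, (A i).PosDef) (hw : w ∈ stdSimplex ℝ ι) : (∑ i, w i • A i).PosDef := by
  refine PosDef.sum_smul (fun i _ => hA i) (fun i _ => hw.1 i) ?_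
  by_contra! h
  have : ∑ i, w i = 0 := sum_eq_zero fun i hi => le_antisymm (h i hi) (hw.1 i)
  simp [hw.2] at this

variable [Fintype n] [DecidableEq n] {𝕜 : Type*} [Field 𝕜] {X : Type*}

theorem mulVec_eq_iff_eq_inv_mulVec {A : Matrix n n 𝕜} (hA : IsUnit A.det) {x b : n → 𝕜} :
    A *ᵥ x = b ↔ x = A⁻¹ *ᵥ b := by
  conv_lhs => rw [← one_mulVec b, ← mul_nonsing_inv A hA, ← mulVec_mulVec]
  exact (mulVec_injective_iff_isUnit.2 ((isUnit_iff_isUnit_det A).2 hA)).eq_iff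

theorem setOf_mulVec_eq_eq_image {S : Set X} {A : X → Matrix n n 𝕜} {b : X → n → 𝕜}
    (hA : ∀ x ∈ S, IsUnit (A x).det) :
    {p : (n → 𝕜) × X | p.2 ∈ S ∧ A p.2 *ᵥ p.1 = b p.2} =
      (fun x => ((A x)⁻¹ *ᵥ b x, x)) '' S := by
  ext ⟨v, x⟩
  constructor
  · rintro ⟨hx, hv⟩
    exact ⟨x, hx, Prod.ext ((mulVec_eq_iff_eq_inv_mulVec (hA x hx)).1 hv).symm rfl⟩
  · rintro ⟨x, hx, hvx⟩
    cases hvx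
    exact ⟨hx, (mulVec_eq_iff_eq_inv_mulVec (hA x hx)).2 rfl⟩

variable [TopologicalSpace 𝕜] [IsTopologicalRing 𝕜] [ContinuousInv₀ 𝕜] [TopologicalSpace X]

theorem isCompact_setOf_mulVec_eq {S : Set X} (hS : IsCompact S) {A : X → Matrix n n 𝕜}
    {b : X → n → 𝕜} (hAc : Continuous A) (hbc : Continuous b)
    (hA : ∀ x ∈ S, IsUnit (A x).det) :
    IsCompact {p : (n → 𝕜) × X | p.2 ∈ S ∧ A p.2 *ᵥ p.1 = b p.2} := by
  rw [setOf_mulVec_eq_eq_image hA]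
  refine hS.image_of_continuousOn (ContinuousOn.prodMk ?_ continuousOn_id)
  intro x hx
  have hinv : ContinuousAt Inv.inv (A x) := continuousAt_matrix_inv _ <| by
    simpa only [Ring.inverse_eq_inv'] using continuousAt_inv₀ (hA x hx).ne_zero
  have hmulVec : Continuous fun q : Matrix n n 𝕜 × (n → 𝕜) => q.1 *ᵥ q.2 :=
    continuous_fst.matrix_mulVec continuous_snd
  exact (hmulVec.continuousAt.comp
    ((hinv.comp hAc.continuousAt).prodMk hbc.continuousAt)).continuousWithinAt

end Matrix

theorem Ghat_compact (n m : ℕ) (Q : Fin m → Matrix (Fin n) (Fin n) ℝ)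
    (hQ : ∀ j, (Q j).PosDef) (xf : Fin m → Fin n → ℝ) :
    IsCompact {p : (Fin n → ℝ) × (Fin m → ℝ) |
      p.2 ∈ stdSimplex ℝ (Fin m) ∧
      (∑ j, p.2 j • Q j).mulVec p.1 = ∑ j, p.2 j • (Q j).mulVec (xf j)} :=
  isCompact_setOf_mulVec_eq (A := fun α => ∑ j, α j • Q j)
    (b := fun α => ∑ j, α j • Q j *ᵥ xf j) (isCompact_stdSimplex ℝ (Fin m))
    (by fun_prop) (by fun_prop)
    fun _ hα => (PosDef.sum_smul_of_mem_stdSimplex hQ hα).det_pos.ne'.isUnit
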